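/- Let n, a, x be positive integers with a ≥ 2 and x ≥ 2, and let M = ⟨na, na+n, 2na+nx+1⟩ be a numerical monoid of embedding dimension 3 with these generators minimal. Then c_eq(M) = na + nx + 1. -/
import Mathlib


/-- The length of a factorization. -/
def fLen {k : ℕ} (z : Fin k → ℕ) : ℕ := ∑ i, z i

/-- The distance between two factorizations:
`max{|z|,|z'|} - |gcd(z,z')|` where the gcd is the coordinatewise minimum. -/
def fDist {k : ℕ} (z z' : Fin k → ℕ) : ℕ :=
  max (fLen z) (fLen z') - ∑ i, min (z i) (z' i)

/-- The set of factorizations of `m` with respect to the generators `n`. -/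
def Facts {k : ℕ} (n : Fin k → ℕ) (m : ℕ) : Set (Fin k → ℕ) :=
  {z | ∑ i, z i * n i = m}

/-- `z` and `z'` are joined by an `N`-chain of factorizations of `m`. -/
def Connects {k : ℕ} (n : Fin k → ℕ) (m N : ℕ) (z z' : Fin k → ℕ) : Prop :=
  ∃ t : ℕ, ∃ f : Fin (t + 1) → Fin k → ℕ,
    f 0 = z ∧ f (Fin.last t) = z' ∧ (∀ i, f i ∈ Facts n m) ∧
    ∀ i : Fin t, fDist (f i.castSucc) (f i.succ) ≤ N

/-- `z` and `z'` are joined by an `N`-chain all of whose terms have length `|z|`. -/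
def ConnectsEq {k : ℕ} (n : Fin k → ℕ) (m N : ℕ) (z z' : Fin k → ℕ) : Prop :=
  ∃ t : ℕ, ∃ f : Fin (t + 1) → Fin k → ℕ,
    f 0 = z ∧ f (Fin.last t) = z' ∧ (∀ i, f i ∈ Facts n m) ∧
    (∀ i, fLen (f i) = fLen z) ∧
    ∀ i : Fin t, fDist (f i.castSucc) (f i.succ) ≤ N

/-- `z` and `z'` are joined by a monotone `N`-chain (the lengths are weakly
increasing or weakly decreasing along the chain). -/
def ConnectsMon {k : ℕ} (n : Fin k → ℕ) (m N : ℕ) (z z' : Fin k → ℕ) : Prop :=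
  ∃ t : ℕ, ∃ f : Fin (t + 1) → Fin k → ℕ,
    f 0 = z ∧ f (Fin.last t) = z' ∧ (∀ i, f i ∈ Facts n m) ∧
    (Monotone (fun i => fLen (f i)) ∨ Antitone (fun i => fLen (f i))) ∧
    ∀ i : Fin t, fDist (f i.castSucc) (f i.succ) ≤ N

/-- The catenary degree of an element. -/
noncomputable def catDeg {k : ℕ} (n : Fin k → ℕ) (m : ℕ) : ℕ :=
  sInf {N | ∀ z ∈ Facts n m, ∀ z' ∈ Facts n m, Connects n m N z z'}

/-- The equivalent catenary degree of an element. -/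
noncomputable def catEq {k : ℕ} (n : Fin k → ℕ) (m : ℕ) : ℕ :=
  sInf {N | ∀ z ∈ Facts n m, ∀ z' ∈ Facts n m, fLen z = fLen z' → ConnectsEq n m N z z'}

/-- The monotone catenary degree of an element. -/
noncomputable def catMon {k : ℕ} (n : Fin k → ℕ) (m : ℕ) : ℕ :=
  sInf {N | ∀ z ∈ Facts n m, ∀ z' ∈ Facts n m, ConnectsMon n m N z z'}

/-- The set of lengths of factorizations of `m`. -/
def LSet {k : ℕ} (n : Fin k → ℕ) (m : ℕ) : Set ℕ := fLen '' Facts n m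

/-- Two lengths `a < b` in the length set of `m` are adjacent. -/
def AdjLen {k : ℕ} (n : Fin k → ℕ) (m a b : ℕ) : Prop :=
  a ∈ LSet n m ∧ b ∈ LSet n m ∧ a < b ∧
    ∀ l ∈ LSet n m, a ≤ l → l ≤ b → l = a ∨ l = b

/-- The adjacent catenary degree of an element: the least `N` such that for every
pair of adjacent lengths the minimum distance between the corresponding sets of
factorizations is at most `N`. -/
noncomputable def catAdj {k : ℕ} (n : Fin k → ℕ) (m : ℕ) : ℕ :=
  sInf {N | ∀ a b : ℕ, AdjLen n m a b →
    ∃ z ∈ Facts n m, ∃ z' ∈ Facts n m, fLen z = a ∧ fLen z' = b ∧ fDist z z' ≤ N}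

/-- Set-wise catenary degree: the maximum over all elements of the monoid. -/
noncomputable def catDegM {k : ℕ} (n : Fin k → ℕ) : ℕ := sSup (catDeg n '' {m | (Facts n m).Nonempty})

/-- Set-wise equivalent catenary degree. -/
noncomputable def catEqM {k : ℕ} (n : Fin k → ℕ) : ℕ := sSup (catEq n '' {m | (Facts n m).Nonempty})

/-- Set-wise adjacent catenary degree. -/
noncomputable def catAdjM {k : ℕ} (n : Fin k → ℕ) : ℕ := sSup (catAdj n '' {m | (Facts n m).Nonempty})

/-- Set-wise monotone catenary degree. -/
noncomputable def catMonM {k : ℕ} (n : Fin k → ℕ) : ℕ := sSup (catMon n '' {m | (Facts n m).Nonempty})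


/-- The generators `na, na+n, 2na+nx+1`. -/
def G (n a x : ℕ) : Fin 3 → ℕ := ![n * a, n * a + n, 2 * n * a + n * x + 1]


lemma connect_dir (n b x m : ℕ) (hn : 0 < n) (z z' : Fin 3 → ℕ)
    (hz : z ∈ Facts (G n (b+2) x) m) (hz' : z' ∈ Facts (G n (b+2) x) m)
    (hL : fLen z = fLen z') (h2 : z 2 ≤ z' 2) :
    ConnectsEq (G n (b+2) x) m (n*(b+2) + n*x + 1) z z' := by
  simp only [Facts, G, Fin.sum_univ_three, Set.mem_setOf_eq, Matrix.cons_val_zero,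
    Matrix.cons_val_one, Matrix.head_cons, Matrix.cons_val_two, Matrix.tail_cons] at hz hz'
  simp only [fLen, Fin.sum_univ_three] at hL
  -- abbreviations (literal)
  have e1 : m = (z 0 + z 1 + z 2) * (n*(b+2)) + n * z 1 + (n*(b+2)+n*x+1) * z 2 := by
    rw [← hz]; ring
  have e1' : m = (z 0 + z 1 + z 2) * (n*(b+2)) + n * z' 1 + (n*(b+2)+n*x+1) * z' 2 := by
    rw [hL, ← hz']; ring
  have key : n * z 1 + (n*(b+2)+n*x+1) * z 2 = n * z' 1 + (n*(b+2)+n*x+1) * z' 2 := by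
    linarith
  have hd2 : z' 2 = z 2 + (z' 2 - z 2) := by omega
  have hKz2 : (n*(b+2)+n*x+1) * z' 2 = (n*(b+2)+n*x+1) * z 2 + (n*(b+2)+n*x+1) * (z' 2 - z 2) := by
    conv_lhs => rw [hd2]
    exact mul_add _ _ _
  have hnz : n * z 1 = n * z' 1 + (n*(b+2)+n*x+1) * (z' 2 - z 2) := by linarith
  have hdvd0 : n ∣ n * z' 1 + (n*(b+2)+n*x+1) * (z' 2 - z 2) := hnz ▸ dvd_mul_right n (z 1)
  have hdvd : n ∣ (n*(b+2)+n*x+1) * (z' 2 - z 2) :=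
    (Nat.dvd_add_right (dvd_mul_right n (z' 1))).mp hdvd0
  have hcop : Nat.Coprime n (n*(b+2)+n*x+1) := by
    have h : n*(b+2)+n*x+1 = n*(b+2+x) + 1 := by ring
    rw [h]
    exact (Nat.coprime_mul_left_add_right n 1 (b+2+x)).mpr (Nat.coprime_one_right n)
  obtain ⟨k, hk⟩ : n ∣ (z' 2 - z 2) := hcop.dvd_of_dvd_mul_left hdvd
  have hz1 : z 1 = z' 1 + (n*(b+2)+n*x+1) * k := by
    have h : n * z 1 = n * (z' 1 + (n*(b+2)+n*x+1) * k) := by rw [hnz, hk]; ring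
    exact Nat.eq_of_mul_eq_mul_left hn h
  have hz2 : z' 2 = z 2 + n * k := by omega
  have hKk : (n*(b+2)+n*x+1) * k = n*k + (n*(b+1)+n*x+1)*k := by ring
  have hz0 : z' 0 = z 0 + (n*(b+1)+n*x+1) * k := by linarith
  -- helper for membership and length
  have helper : ∀ p q : ℕ, p + q = k →
      (z 0 + (n*(b+1)+n*x+1)*p) * (n*(b+2)) + (z' 1 + (n*(b+2)+n*x+1)*q) * (n*(b+2)+n)
        + (z 2 + n*p) * (2*n*(b+2)+n*x+1) = m ∧
      (z 0 + (n*(b+1)+n*x+1)*p) + (z' 1 + (n*(b+2)+n*x+1)*q) + (z 2 + n*p) = z 0 + z 1 + z 2 := by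
    intro p q hpq
    constructor
    · have h : (z 0 + (n*(b+1)+n*x+1)*p) * (n*(b+2)) + (z' 1 + (n*(b+2)+n*x+1)*q) * (n*(b+2)+n)
          + (z 2 + n*p) * (2*n*(b+2)+n*x+1)
          = z 0 * (n*(b+2)) + (z' 1 + (n*(b+2)+n*x+1)*(p+q)) * (n*(b+2)+n) + z 2 * (2*n*(b+2)+n*x+1) := by
        ring
      rw [h, hpq, ← hz1]; exact hz
    · have h : (n*(b+2)+n*x+1)*(p+q) = (n*(b+1)+n*x+1)*p + (n*(b+2)+n*x+1)*q + n*p := by ring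
      rw [hz1, ← hpq, h]; ring
  refine ⟨k, fun j => ![z 0 + (n*(b+1)+n*x+1) * (j:ℕ), z' 1 + (n*(b+2)+n*x+1) * (k - (j:ℕ)),
    z 2 + n * (j:ℕ)], ?_, ?_, ?_, ?_, ?_⟩
  · funext i
    fin_cases i <;> simp [← hz1, ← hz2]
  · funext i
    fin_cases i <;> simp [hz0, Fin.val_last, hz2]
  · intro j
    have hj : (j:ℕ) + (k - (j:ℕ)) = k := by omega
    simpa [Facts, G, Fin.sum_univ_three] using (helper _ _ hj).1
  · intro j
    have hj : (j:ℕ) + (k - (j:ℕ)) = k := by omega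
    simpa [fLen, Fin.sum_univ_three] using (helper _ _ hj).2
  · intro i
    have hik : (i:ℕ) < k := i.isLt
    have hlen1 := (helper (i:ℕ) (k - (i:ℕ)) (by omega)).2
    have hlen2 := (helper ((i:ℕ)+1) (k - ((i:ℕ)+1)) (by omega)).2
    have hsplit : (n*(b+2)+n*x+1) * k
        = (n*(b+2)+n*x+1) * (k - ((i:ℕ)+1)) + (n*(b+2)+n*x+1) * ((i:ℕ)+1) := by
      have h1 : k - ((i:ℕ)+1) + ((i:ℕ)+1) = k := by omega
      conv_lhs => rw [← h1]
      exact mul_add _ _ _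
    simp only [fDist, fLen, Fin.sum_univ_three, Fin.coe_castSucc, Fin.val_succ,
      Matrix.cons_val_zero, Matrix.cons_val_one, Matrix.head_cons, Matrix.cons_val_two,
      Matrix.tail_cons]
    have m1 : min (z 0 + (n*(b+1)+n*x+1) * (i:ℕ)) (z 0 + (n*(b+1)+n*x+1) * ((i:ℕ)+1))
        = z 0 + (n*(b+1)+n*x+1) * (i:ℕ) :=
      min_eq_left (Nat.add_le_add_left (Nat.mul_le_mul le_rfl (by omega)) _)
    have m2 : min (z' 1 + (n*(b+2)+n*x+1) * (k - (i:ℕ))) (z' 1 + (n*(b+2)+n*x+1) * (k - ((i:ℕ)+1)))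
        = z' 1 + (n*(b+2)+n*x+1) * (k - ((i:ℕ)+1)) :=
      min_eq_right (Nat.add_le_add_left (Nat.mul_le_mul le_rfl (by omega)) _)
    have m3 : min (z 2 + n * (i:ℕ)) (z 2 + n * ((i:ℕ)+1)) = z 2 + n * (i:ℕ) :=
      min_eq_left (Nat.add_le_add_left (Nat.mul_le_mul le_rfl (by omega)) _)
    have hexp1 : (n*(b+2)+n*x+1) * ((i:ℕ)+1)
        = (n*(b+1)+n*x+1)*(i:ℕ) + n*(i:ℕ) + (n*(b+2)+n*x+1) := by ring
    rw [hlen1, hlen2, max_self, m1, m2, m3, Nat.sub_le_iff_le_add]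
    linarith [hz1, hsplit, hexp1]

lemma fDist_comm' {k : ℕ} (z z' : Fin k → ℕ) : fDist z z' = fDist z' z := by
  unfold fDist
  rw [max_comm]
  congr 1
  exact Finset.sum_congr rfl fun i _ => min_comm _ _

lemma connectsEq_symm' {k : ℕ} (g : Fin k → ℕ) (m N : ℕ) (z z' : Fin k → ℕ)
    (hL : fLen z = fLen z') (h : ConnectsEq g m N z z') : ConnectsEq g m N z' z := by
  obtain ⟨t, f, h0, hlast, hmem, hlen, hd⟩ := h
  refine ⟨t, fun i => f i.rev, ?_, ?_, fun i => hmem _, fun i => (hlen _).trans hL, ?_⟩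
  · show f (Fin.rev 0) = z'
    rw [Fin.rev_zero, hlast]
  · show f (Fin.last t).rev = z
    rw [Fin.rev_last, h0]
  · intro i
    show fDist (f i.castSucc.rev) (f i.succ.rev) ≤ N
    rw [Fin.rev_castSucc, Fin.rev_succ, fDist_comm']
    exact hd i.rev

-- uniqueness of length-K factorizations of m0 = K*(n*a+n)
lemma facts_m0 (n b x : ℕ) (hn : 0 < n) (w : Fin 3 → ℕ)
    (hw : w ∈ Facts (G n (b+2) x) ((n*(b+2)+n*x+1) * (n*(b+2)+n)))
    (hlen : fLen w = n*(b+2)+n*x+1) :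
    w = ![0, n*(b+2)+n*x+1, 0] ∨ w = ![n*(b+1)+n*x+1, 0, n] := by
  simp only [Facts, G, Fin.sum_univ_three, Set.mem_setOf_eq, Matrix.cons_val_zero,
    Matrix.cons_val_one, Matrix.head_cons, Matrix.cons_val_two, Matrix.tail_cons] at hw
  simp only [fLen, Fin.sum_univ_three] at hlen
  have e1 : (n*(b+2)+n*x+1) * (n*(b+2)+n)
      = (w 0 + w 1 + w 2) * (n*(b+2)) + n * w 1 + (n*(b+2)+n*x+1) * w 2 := by
    rw [← hw]; ring
  have e2 : (n*(b+2)+n*x+1) * (n*(b+2)+n)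
      = (w 0 + w 1 + w 2) * (n*(b+2)) + n * (n*(b+2)+n*x+1) := by
    rw [hlen]; ring
  have key : n * w 1 + (n*(b+2)+n*x+1) * w 2 = n * (n*(b+2)+n*x+1) := by linarith
  have hdvd : n ∣ (n*(b+2)+n*x+1) * w 2 :=
    (Nat.dvd_add_right (dvd_mul_right n (w 1))).mp (key ▸ dvd_mul_right n (n*(b+2)+n*x+1))
  have hcop : Nat.Coprime n (n*(b+2)+n*x+1) := by
    have h : n*(b+2)+n*x+1 = n*(b+2+x) + 1 := by ring
    rw [h]
    exact (Nat.coprime_mul_left_add_right n 1 (b+2+x)).mpr (Nat.coprime_one_right n)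
  obtain ⟨c, hc⟩ : n ∣ w 2 := hcop.dvd_of_dvd_mul_left hdvd
  have hc1 : c ≤ 1 := by
    by_contra hcgt
    have : 2 * n ≤ w 2 := by rw [hc]; nlinarith
    nlinarith
  interval_cases c
  · -- w 2 = 0
    left
    have hw2 : w 2 = 0 := by omega
    have hw1 : n * w 1 = n * (n*(b+2)+n*x+1) := by rw [hw2] at key; linarith
    have hw1' : w 1 = n*(b+2)+n*x+1 := Nat.eq_of_mul_eq_mul_left hn hw1
    have hw0 : w 0 = 0 := by omega
    funext i; fin_cases i <;> simp [hw0, hw1', hw2]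
  · -- w 2 = n
    right
    have hw2 : w 2 = n := by omega
    have hw1 : n * w 1 = 0 := by
      have h : (n*(b+2)+n*x+1) * n = n * (n*(b+2)+n*x+1) := by ring
      rw [hw2, h] at key
      omega
    have hw1' : w 1 = 0 := by
      rcases Nat.mul_eq_zero.mp hw1 with h | h
      · omega
      · exact h
    have hw0 : w 0 = n*(b+1)+n*x+1 := by
      have h2 : n*(b+2)+n*x+1 = n + (n*(b+1)+n*x+1) := by ring
      linarith [hlen, hw1', hw2, h2]
    funext i; fin_cases i <;> simp [hw0, hw1', hw2]

-- membership of the two special factorizations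
lemma zstar_mem (n b x : ℕ) :
    ![0, n*(b+2)+n*x+1, 0] ∈ Facts (G n (b+2) x) ((n*(b+2)+n*x+1) * (n*(b+2)+n)) := by
  simp [Facts, G, Fin.sum_univ_three]

lemma zstar'_mem (n b x : ℕ) :
    ![n*(b+1)+n*x+1, 0, n] ∈ Facts (G n (b+2) x) ((n*(b+2)+n*x+1) * (n*(b+2)+n)) := by
  simp [Facts, G, Fin.sum_univ_three]
  ring

lemma zstar_len (n b x : ℕ) : fLen ![0, n*(b+2)+n*x+1, 0] = n*(b+2)+n*x+1 := by
  simp [fLen, Fin.sum_univ_three]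

lemma zstar'_len (n b x : ℕ) : fLen ![n*(b+1)+n*x+1, 0, n] = n*(b+2)+n*x+1 := by
  simp [fLen, Fin.sum_univ_three]; ring

lemma dist_stars (n b x : ℕ) :
    fDist ![0, n*(b+2)+n*x+1, 0] ![n*(b+1)+n*x+1, 0, n] = n*(b+2)+n*x+1 := by
  unfold fDist
  rw [zstar_len, zstar'_len]
  simp [Fin.sum_univ_three]


lemma connect_all (n b x m : ℕ) (hn : 0 < n) (z z' : Fin 3 → ℕ)
    (hz : z ∈ Facts (G n (b+2) x) m) (hz' : z' ∈ Facts (G n (b+2) x) m)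
    (hL : fLen z = fLen z') :
    ConnectsEq (G n (b+2) x) m (n*(b+2) + n*x + 1) z z' := by
  rcases le_total (z 2) (z' 2) with h | h
  · exact connect_dir n b x m hn z z' hz hz' hL h
  · exact connectsEq_symm' _ _ _ _ _ hL.symm (connect_dir n b x m hn z' z hz' hz hL.symm h)

/-- For `M = ⟨na, na+n, 2na+nx+1⟩` with `a, x ≥ 2`,
`c_eq(M) = na + nx + 1`. -/
theorem family_equivalent (n a x : ℕ) (hn : 0 < n) (ha : 2 ≤ a) (hx : 2 ≤ x)
    (hmin : ¬ ∃ u v : ℕ, u * (n * a) + v * (n * a + n) = 2 * n * a + n * x + 1) :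
    catEqM (G n a x) = n * a + n * x + 1 := by
  obtain ⟨b, rfl⟩ : ∃ b, a = b + 2 := ⟨a - 2, by omega⟩
  clear hmin ha hx
  have hub : ∀ m, catEq (G n (b+2) x) m ≤ n*(b+2) + n*x + 1 := by
    intro m
    exact Nat.sInf_le (fun z hz z' hz' hL => connect_all n b x m hn z z' hz hz' hL)
  set m0 : ℕ := (n*(b+2)+n*x+1) * (n*(b+2)+n) with hm0
  have hKm0 : catEq (G n (b+2) x) m0 = n*(b+2) + n*x + 1 := by
    refine le_antisymm (hub m0) ?_
    refine le_csInf ⟨n*(b+2)+n*x+1,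
      fun z hz z' hz' hL => connect_all n b x m0 hn z z' hz hz' hL⟩ ?_
    intro N hN
    have hchain := hN _ (zstar_mem n b x) _ (zstar'_mem n b x)
      ((zstar_len n b x).trans (zstar'_len n b x).symm)
    obtain ⟨t, f, h0, hlast, hmem, hlen, hd⟩ := hchain
    have huniq : ∀ j, f j = ![0, n*(b+2)+n*x+1, 0] ∨ f j = ![n*(b+1)+n*x+1, 0, n] :=
      fun j => facts_m0 n b x hn (f j) (hmem j) ((hlen j).trans (zstar_len n b x))
    have hne : (![0, n*(b+2)+n*x+1, 0] : Fin 3 → ℕ) ≠ ![n*(b+1)+n*x+1, 0, n] := by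
      intro h
      have h1 := congrFun h 1
      simp at h1
    have hstep : ∃ i : Fin t, f i.castSucc ≠ f i.succ := by
      by_contra hcon
      push_neg at hcon
      have hconst : ∀ j : Fin (t+1), f j = f 0 := by
        intro j
        induction j using Fin.induction with
        | zero => rfl
        | succ i ih => rw [← hcon i]; exact ih
      exact hne (by rw [← h0, ← hlast, hconst (Fin.last t)])
    obtain ⟨i, hi⟩ := hstep
    have hdi := hd i
    rcases huniq i.castSucc with h1 | h1 <;> rcases huniq i.succ with h2 | h2
    · exact absurd (h1.trans h2.symm) hi
    · rw [h1, h2, dist_stars n b x] at hdi; exact hdi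
    · rw [h1, h2, fDist_comm', dist_stars n b x] at hdi; exact hdi
    · exact absurd (h1.trans h2.symm) hi
  have hne0 : (Facts (G n (b+2) x) m0).Nonempty := ⟨_, zstar_mem n b x⟩
  refine le_antisymm ?_ ?_
  · refine csSup_le ⟨catEq (G n (b+2) x) m0, ⟨m0, hne0, rfl⟩⟩ ?_
    rintro y ⟨m, hm, rfl⟩
    exact hub m
  · exact le_csSup ⟨n*(b+2)+n*x+1, by rintro y ⟨m, hm, rfl⟩; exact hub m⟩ ⟨m0, hne0, hKm0⟩
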